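/- Let P be the lazy random walk transition matrix on a finite connected graph G = (V,E) with m edges, stationary distribution π(u) = d_u/(2m), and for A ⊆ V let Q(A, V∖A) = Σ_{u∈A, v∉A} π(u)P(u,v). Fix a labelling of V as {1,…,n} and a function g : V → ℝ with 0 = g(1) ≤ g(2) ≤ ⋯ ≤ g(n) = 1. Then 1 ≤ E_P(g,g) · Σ_{j=1}^{n−1} 1/Q([j], V∖[j]), where [j] = {1,…,j}, provided Q([j], V∖[j]) > 0 for all j. -/

import Mathlib

open Finset

/-- Transition matrix of the lazy random walk on a graph. -/
noncomputable def lazyWalk {V : Type*} [Fintype V] [DecidableEq V]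
    (G : SimpleGraph V) [DecidableRel G.Adj] : V → V → ℝ :=
  fun u v => if u = v then 1/2 else if G.Adj u v then 1/(2 * G.degree u) else 0

/-!
Let `d j = g j - g (j - 1)` be the increments of `g` along the labelling. For `u < v` the
increments telescope to `g v - g u`, and since they are nonnegative,
`∑_{u < j ≤ v} d j ^ 2 ≤ (g v - g u) ^ 2`. The edge `(u, v)` crosses the cut `[j]` exactly when
`u < j ≤ v`, so weighting these inequalities by `π u P u v` and using reversibility
`π u P u v = π v P v u` gives `∑_j d j ^ 2 Q j ≤ E_P(g, g)`. Cauchy–Schwarz applied to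
`1 = ∑_j (d j √(Q j)) (1 / √(Q j))` finishes the proof.
-/

theorem sum_Ioc_sub_pred {M : Type*} [AddCommGroup M] (f : ℕ → M) {a b : ℕ} (hab : a ≤ b) :
    ∑ j ∈ Ioc a b, (f j - f (j - 1)) = f b - f a := by
  induction b, hab using Nat.le_induction with
  | base => simp
  | succ b hab ih => rw [sum_Ioc_succ_top hab, ih, Nat.add_sub_cancel]; abel

theorem sum_Ioc_sq_sub_pred_le {f : ℕ → ℝ} (hf : Monotone f) {a b : ℕ} (hab : a ≤ b) :
    ∑ j ∈ Ioc a b, (f j - f (j - 1)) ^ 2 ≤ (f b - f a) ^ 2 :=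
  sum_Ioc_sub_pred f hab ▸
    sum_sq_le_sq_sum_of_nonneg fun j _ => sub_nonneg.2 (hf (Nat.sub_le j 1))

theorem sum_Ioc_sq_sub_pred_add_le {f : ℕ → ℝ} (hf : Monotone f) (a b : ℕ) :
    ∑ j ∈ Ioc a b, (f j - f (j - 1)) ^ 2 + ∑ j ∈ Ioc b a, (f j - f (j - 1)) ^ 2 ≤
      (f a - f b) ^ 2 := by
  rcases le_total a b with hab | hba
  · rw [Ioc_eq_empty_of_le hab, sum_empty, add_zero, ← neg_sub, neg_sq]
    exact sum_Ioc_sq_sub_pred_le hf hab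
  · rw [Ioc_eq_empty_of_le hba, sum_empty, zero_add]
    exact sum_Ioc_sq_sub_pred_le hf hba

section Cuts

variable {V : Type*} [Fintype V]

theorem sum_mul_cut_eq (ℓ : V → ℕ) (w : V → V → ℝ) (c : ℕ → ℝ) (s : Finset ℕ) :
    ∑ j ∈ s, c j * ∑ u with ℓ u < j, ∑ v with ¬ ℓ v < j, w u v =
      ∑ u, ∑ v, (∑ j ∈ s with j ∈ Ioc (ℓ u) (ℓ v), c j) * w u v := by
  simp only [sum_filter, mul_sum, sum_mul]
  rw [sum_comm]
  refine sum_congr rfl fun u _ => ?_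
  rw [sum_comm]
  refine sum_congr rfl fun j _ => ?_
  rw [mul_ite, mul_sum, mul_zero]
  split_ifs with h <;> simp [mem_Ioc, h, mul_comm]

theorem sum_mul_le_half_sum_mul {w S D : V → V → ℝ} (hw_symm : ∀ u v, w u v = w v u)
    (hw : ∀ u v, 0 ≤ w u v) (hSD : ∀ u v, S u v + S v u ≤ D u v) :
    ∑ u, ∑ v, S u v * w u v ≤ (1 / 2) * ∑ u, ∑ v, D u v * w u v := by
  have hswap : ∑ u, ∑ v, S u v * w u v = ∑ u, ∑ v, S v u * w u v := by
    rw [sum_comm]; simp only [hw_symm]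
  have : 2 * ∑ u, ∑ v, S u v * w u v ≤ ∑ u, ∑ v, D u v * w u v := by
    calc 2 * ∑ u, ∑ v, S u v * w u v = ∑ u, ∑ v, (S u v + S v u) * w u v := by
          rw [two_mul]; nth_rw 2 [hswap]; simp only [← sum_add_distrib, add_mul]
      _ ≤ _ := by gcongr with u _ v _; exacts [hw u v, hSD u v]
  linarith

theorem sum_sq_sub_pred_mul_cut_le {f : ℕ → ℝ} (hf : Monotone f) (ℓ : V → ℕ)
    {w : V → V → ℝ} (hw_symm : ∀ u v, w u v = w v u) (hw : ∀ u v, 0 ≤ w u v)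
    (s : Finset ℕ) :
    ∑ j ∈ s, (f j - f (j - 1)) ^ 2 * ∑ u with ℓ u < j, ∑ v with ¬ ℓ v < j, w u v ≤
      (1 / 2) * ∑ u, ∑ v, (f (ℓ u) - f (ℓ v)) ^ 2 * w u v := by
  rw [sum_mul_cut_eq]
  refine sum_mul_le_half_sum_mul hw_symm hw fun u v => ?_
  refine (add_le_add ?_ ?_).trans (sum_Ioc_sq_sub_pred_add_le hf (ℓ u) (ℓ v)) <;>
    exact sum_le_sum_of_subset_of_nonneg (fun j hj => (mem_filter.1 hj).2)
      fun j _ _ => sq_nonneg _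

end Cuts

theorem sq_sum_le_sum_sq_mul_mul_sum_inv {ι : Type*} (s : Finset ι) (d : ι → ℝ) {Q : ι → ℝ}
    (hQ : ∀ j ∈ s, 0 < Q j) :
    (∑ j ∈ s, d j) ^ 2 ≤ (∑ j ∈ s, d j ^ 2 * Q j) * ∑ j ∈ s, 1 / Q j :=
  sum_sq_le_sum_mul_sum_of_sq_le_mul s (fun j hj => by have := hQ j hj; positivity)
    (fun j hj => by have := hQ j hj; positivity)
    fun j hj => by rw [mul_assoc, mul_one_div_cancel (hQ j hj).ne', mul_one]

section LazyWalk

variable {V : Type*} [Fintype V] [DecidableEq V] (G : SimpleGraph V) [DecidableRel G.Adj]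

theorem lazyWalk_nonneg (u v : V) : 0 ≤ lazyWalk G u v := by
  unfold lazyWalk; split_ifs <;> positivity

theorem degree_mul_lazyWalk_comm (u v : V) :
    (G.degree u : ℝ) * lazyWalk G u v = G.degree v * lazyWalk G v u := by
  unfold lazyWalk
  by_cases huv : u = v
  · rw [huv]
  by_cases hadj : G.Adj u v
  · have hu : 0 < G.degree u := (G.degree_pos_iff_exists_adj u).2 ⟨v, hadj⟩
    have hv : 0 < G.degree v := (G.degree_pos_iff_exists_adj v).2 ⟨u, hadj.symm⟩
    simp only [if_neg huv, if_neg (Ne.symm huv), if_pos hadj, if_pos hadj.symm]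
    field_simp
  · have hadj' : ¬ G.Adj v u := fun h => hadj h.symm
    simp [huv, Ne.symm huv, hadj, hadj']

end LazyWalk

theorem stmt_11 (n : ℕ) (hn : 2 ≤ n) (G : SimpleGraph (Fin n))
    [DecidableRel G.Adj]
    (m : ℕ)
    (π : Fin n → ℝ) (hπ : ∀ u, π u = (G.degree u : ℝ) / (2 * m))
    (g : Fin n → ℝ) (hmono : Monotone g)
    (hg0 : g ⟨0, by omega⟩ = 0) (hgn : g ⟨n - 1, by omega⟩ = 1)
    (Q : ℕ → ℝ)
    (hQ : ∀ j, Q j = ∑ u ∈ Finset.univ.filter (fun v : Fin n => v.val < j),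
        ∑ v ∈ Finset.univ.filter (fun v : Fin n => ¬ v.val < j),
          π u * lazyWalk G u v)
    (hQpos : ∀ j ∈ Finset.Icc 1 (n - 1), 0 < Q j) :
    1 ≤ ((1/2) * ∑ u, ∑ v, (g u - g v) ^ 2 * π u * lazyWalk G u v) *
        ∑ j ∈ Finset.Icc 1 (n - 1), 1 / Q j := by
  set f : ℕ → ℝ := fun i => g ⟨min i (n - 1), by omega⟩
  have hf : Monotone f := fun i j hij => hmono (Fin.mk_le_mk.2 (min_le_min_right _ hij))
  have hfg : ∀ u : Fin n, f u = g u := fun u => congrArg g (Fin.ext (min_eq_left (by omega)))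
  have hsum : ∑ j ∈ Icc 1 (n - 1), (f j - f (j - 1)) = 1 := by
    rw [show Icc 1 (n - 1) = Ioc 0 (n - 1) from Icc_add_one_left_eq_Ioc 0 _,
      sum_Ioc_sub_pred f (Nat.zero_le _)]
    simp [f, hg0, hgn]
  have hw_symm : ∀ u v, π u * lazyWalk G u v = π v * lazyWalk G v u := by
    intro u v
    simp only [hπ, div_mul_eq_mul_div, degree_mul_lazyWalk_comm]
  have hw : ∀ u v, 0 ≤ π u * lazyWalk G u v := fun u v =>
    mul_nonneg (by rw [hπ]; positivity) (lazyWalk_nonneg G u v)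
  have henergy := sum_sq_sub_pred_mul_cut_le hf Fin.val hw_symm hw (Icc 1 (n - 1))
  simp only [hfg, ← hQ, ← mul_assoc] at henergy
  calc (1 : ℝ) = (∑ j ∈ Icc 1 (n - 1), (f j - f (j - 1))) ^ 2 := by rw [hsum, one_pow]
    _ ≤ (∑ j ∈ Icc 1 (n - 1), (f j - f (j - 1)) ^ 2 * Q j) * ∑ j ∈ Icc 1 (n - 1), 1 / Q j :=
      sq_sum_le_sum_sq_mul_mul_sum_inv _ _ hQpos
    _ ≤ _ :=
      mul_le_mul_of_nonneg_right henergy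
        (sum_nonneg fun j hj => (one_div_pos.2 (hQpos j hj)).le)
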